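/- Let T be a linear, trace-preserving, positive map on M_d(ℂ) and T^∞ the spectral projection onto its fixed-point space (the Cesàro mean limit of T^k). Then the map id − (T − T^∞) is invertible as a linear operator on M_d(ℂ). -/

import Mathlib

open Matrix Filter
open scoped ComplexOrder

/-- Trace norm (Schatten 1-norm) of a complex matrix: `tr √(XᴴX)`. -/
noncomputable def traceNorm {d : ℕ} (X : Matrix (Fin d) (Fin d) ℂ) : ℝ :=
  (((Matrix.posSemidef_conjTranspose_mul_self X).1.eigenvectorUnitary : Matrix (Fin d) (Fin d) ℂ) *
    diagonal ((fun x : ℝ => (x : ℂ)) ∘ Real.sqrt ∘ (Matrix.posSemidef_conjTranspose_mul_self X).1.eigenvalues) *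
    (star (Matrix.posSemidef_conjTranspose_mul_self X).1.eigenvectorUnitary :
      Matrix (Fin d) (Fin d) ℂ)).trace.re

/-- Linear endomorphisms of `M_d(ℂ)` (superoperators). -/
abbrev MatEnd (d : ℕ) := Module.End ℂ (Matrix (Fin d) (Fin d) ℂ)

/-- Trace-preserving map. -/
def IsTP {d : ℕ} (T : MatEnd d) : Prop := ∀ X, (T X).trace = X.trace

/-- Positive map: maps PSD matrices to PSD matrices. -/
def IsPos {d : ℕ} (T : MatEnd d) : Prop := ∀ X, X.PosSemidef → (T X).PosSemidef

/-- Hermiticity-preserving map. -/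
def IsHP {d : ℕ} (T : MatEnd d) : Prop := ∀ X, (T X)ᴴ = T Xᴴ

/-- Induced 1→1 norm: `sup_{X ≠ 0} ‖T X‖₁ / ‖X‖₁`. -/
noncomputable def norm1to1 {d : ℕ} (T : MatEnd d) : ℝ :=
  sSup {r | ∃ X, X ≠ 0 ∧ r = traceNorm (T X) / traceNorm X}

/-- Trace-norm contraction coefficient: sup over nonzero Hermitian traceless `σ`. -/
noncomputable def tau {d : ℕ} (T : MatEnd d) : ℝ :=
  sSup {r | ∃ σ : Matrix (Fin d) (Fin d) ℂ,
    σ.IsHermitian ∧ σ.trace = 0 ∧ σ ≠ 0 ∧ r = traceNorm (T σ) / traceNorm σ}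

/-- Density matrix: positive semidefinite with unit trace. -/
def IsDensity {d : ℕ} (ρ : Matrix (Fin d) (Fin d) ℂ) : Prop := ρ.PosSemidef ∧ ρ.trace = 1

/-- `Tinf` is the Cesàro-mean fixed point projection of `T`. -/
def IsCesaroProj {d : ℕ} (T Tinf : MatEnd d) : Prop :=
  ∀ X, Tendsto (fun n : ℕ => (n : ℂ)⁻¹ • ∑ k ∈ Finset.range n, (T ^ (k + 1)) X)
    atTop (nhds (Tinf X))

open Topology

/-!
Let `Mₙ x = n⁻¹ ∑_{k<n} T^(k+1) x` and `P x = lim Mₙ x`. Reindexing the sum, `Mₙ (T x)` equals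
`(1 + 1/n) Mₙ₊₁ x - T x / n`, so `P T = P`; as `T` is continuous, also `T P = P`; and `P x = x`
whenever `T x = x`. If `x - T x + P x = 0`, applying `P` gives `P x = 0`, hence `T x = x` and
`x = P x = 0`. So `1 - (T - P)` is injective, hence invertible in finite dimension.
-/

section Cesaro

variable {𝕜 E : Type*} [Field 𝕜] [AddCommGroup E] [Module 𝕜 E]

def cesaroMean (T : Module.End 𝕜 E) (x : E) (n : ℕ) : E :=
  (n : 𝕜)⁻¹ • ∑ k ∈ Finset.range n, (T ^ (k + 1)) x

theorem map_cesaroMean (T : Module.End 𝕜 E) (x : E) (n : ℕ) :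
    T (cesaroMean T x n) = cesaroMean T (T x) n := by
  simp only [cesaroMean, map_smul, map_sum, ← Module.End.mul_apply, (Commute.self_pow T _).eq]

variable [CharZero 𝕜]

theorem cesaroMean_apply_self_eq (T : Module.End 𝕜 E) (x : E) (n : ℕ) :
    cesaroMean T (T x) n =
      (((n : 𝕜) + 1) / n) • cesaroMean T x (n + 1) - (n : 𝕜)⁻¹ • T x := by
  have hsum : ∑ k ∈ Finset.range (n + 1), (T ^ (k + 1)) x
      = ∑ k ∈ Finset.range n, (T ^ (k + 1)) (T x) + T x := by
    simp only [Finset.sum_range_succ', ← Module.End.mul_apply, ← pow_succ, zero_add, pow_one]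
  have hcoef : ((n : 𝕜) + 1) / n * ((n + 1 : ℕ) : 𝕜)⁻¹ = (n : 𝕜)⁻¹ := by
    have : (n : 𝕜) + 1 ≠ 0 := Nat.cast_add_one_ne_zero n
    push_cast
    field_simp
  rw [cesaroMean, cesaroMean, hsum, smul_smul, hcoef, smul_add, add_sub_cancel_right]

theorem cesaroMean_of_apply_eq {T : Module.End 𝕜 E} {x : E} (hx : T x = x) {n : ℕ}
    (hn : n ≠ 0) : cesaroMean T x n = x := by
  have hpow : ∀ m : ℕ, (T ^ m) x = x := fun m => by
    rw [Module.End.pow_apply, Function.iterate_fixed hx]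
  simp only [cesaroMean, hpow, Finset.sum_const, Finset.card_range, ← Nat.cast_smul_eq_nsmul 𝕜,
    smul_smul, inv_mul_cancel₀ ((Nat.cast_ne_zero (R := 𝕜)).mpr hn), one_smul]

theorem tendsto_cesaroMean_of_apply_eq [TopologicalSpace E] {T : Module.End 𝕜 E} {x : E}
    (hx : T x = x) :
    Tendsto (cesaroMean T x) atTop (𝓝 x) :=
  tendsto_const_nhds.congr' <| (eventually_ne_atTop 0).mono fun _ hn =>
    (cesaroMean_of_apply_eq hx hn).symm

variable [TopologicalSpace 𝕜] [ContinuousAdd 𝕜] [ContinuousSMul ℚ≥0 𝕜]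
  [TopologicalSpace E] [IsTopologicalAddGroup E] [ContinuousSMul 𝕜 E]

theorem Filter.Tendsto.cesaroMean_apply_self {T : Module.End 𝕜 E} {x L : E}
    (h : Tendsto (cesaroMean T x) atTop (𝓝 L)) :
    Tendsto (cesaroMean T (T x)) atTop (𝓝 L) := by
  have hcoef : Tendsto (fun n : ℕ => ((n : 𝕜) + 1) / n) atTop (𝓝 1) := by
    have h1 : Tendsto (fun n : ℕ => 1 + (n : 𝕜)⁻¹) atTop (𝓝 1) := by
      simpa using tendsto_const_nhds.add (tendsto_inv_atTop_nhds_zero_nat (𝕜 := 𝕜))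
    refine h1.congr' ?_
    filter_upwards [eventually_ne_atTop 0] with n hn
    rw [add_div, div_self (Nat.cast_ne_zero.mpr hn), one_div]
  have hlim := (hcoef.smul (h.comp (tendsto_add_atTop_nat 1))).sub
    ((tendsto_inv_atTop_nhds_zero_nat (𝕜 := 𝕜)).smul_const (T x))
  simp only [one_smul, zero_smul, sub_zero] at hlim
  exact hlim.congr fun n => (cesaroMean_apply_self_eq T x n).symm

end Cesaro

theorem LinearMap.ker_one_sub_sub_eq_bot {R M : Type*} [Ring R] [AddCommGroup M] [Module R M]
    {T P : Module.End R M} (hPT : ∀ x, P (T x) = P x) (hTP : ∀ x, T (P x) = P x)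
    (hfix : ∀ x, T x = x → P x = x) : LinearMap.ker (1 - (T - P)) = ⊥ := by
  refine LinearMap.ker_eq_bot'.mpr fun x hx => ?_
  have hx' : x - T x + P x = 0 := by simpa [sub_add] using hx
  have hPx : P x = 0 := by
    simpa [hPT, hfix _ (hTP x)] using congrArg P hx'
  have hTx : T x = x := by
    rw [hPx, add_zero, sub_eq_zero] at hx'
    exact hx'.symm
  rw [← hfix x hTx, hPx]

theorem isUnit_id_sub_general {d : ℕ} (T Tinf : MatEnd d)
    (hinf : IsCesaroProj T Tinf) : IsUnit (1 - (T - Tinf) : MatEnd d) := by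
  have hlim : ∀ X, Tendsto (cesaroMean T X) atTop (𝓝 (Tinf X)) := hinf
  have hcont : Continuous T := LinearMap.continuous_of_finiteDimensional T
  have hPT : ∀ X, Tinf (T X) = Tinf X := fun X =>
    tendsto_nhds_unique (hlim (T X)) (hlim X).cesaroMean_apply_self
  have hTP : ∀ X, T (Tinf X) = Tinf X := fun X =>
    tendsto_nhds_unique (((hcont.tendsto _).comp (hlim X)).congr fun n => map_cesaroMean T X n)
      (hlim X).cesaroMean_apply_self
  have hfix : ∀ X, T X = X → Tinf X = X := fun X hX =>
    tendsto_nhds_unique (hlim X) (tendsto_cesaroMean_of_apply_eq hX)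
  rw [LinearMap.isUnit_iff_ker_eq_bot]
  exact LinearMap.ker_one_sub_sub_eq_bot hPT hTP hfix

/-- `id − (T − T^∞)` is invertible. -/
theorem isUnit_id_sub {d : ℕ} (T Tinf : MatEnd d) (hTP : IsTP T) (hPos : IsPos T)
    (hinf : IsCesaroProj T Tinf) : IsUnit (1 - (T - Tinf) : MatEnd d) :=
  isUnit_id_sub_general T Tinf hinf
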